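/- Let C₁ ⊆ C₂ ⊆ GF(4)ⁿ be additive self-orthogonal codes with |C₁| = 2^{n−k₁} and |C₂| = 2^{n−k₂}. Suppose every nonzero vector of C₁⊥ has Hamming weight at least d₁, and every nonzero vector of C₂ has Hamming weight at least δ. Define C = {(u, u+v) ∈ GF(4)^{2n} : u ∈ C₂⊥, v ∈ C₁}. Then C is an additive code with |C| = 2^{2n−k₁+k₂}, C is self-orthogonal with trace dual C⊥ = {(u, u+v) : u ∈ C₁⊥, v ∈ C₂}, and every nonzero vector of C⊥ has Hamming weight at least min{2d₁, δ}. (From a pure [[n,k₁,d₁]] code and a pure [[n,k₂,d₂]] code with C₁ ⊆ C₂ one obtains a pure [[2n, k₁−k₂, d]] code with d = min{2d₁, δ}, where δ = dist(C₂).) -/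

import Mathlib

noncomputable section

open Finset Polynomial

/-- The field `GF(4)` with four elements. -/
abbrev F4 := GaloisField 2 2

/-- The trace inner product `u∗v = Σⱼ (uⱼ v̄ⱼ + ūⱼ vⱼ)` on `GF(4)ⁿ`,
where conjugation is `x̄ = x²`.  It takes values in the prime subfield. -/
def trIP {n : ℕ} (u v : Fin n → F4) : F4 :=
  ∑ j, (u j * (v j) ^ 2 + (u j) ^ 2 * v j)

/-- The Hamming weight of a vector in `GF(4)ⁿ`. -/
def wt {n : ℕ} (u : Fin n → F4) : ℕ := Set.ncard {j | u j ≠ 0}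

/-- The dual of a code with respect to the trace inner product. -/
def trDual {n : ℕ} (C : Set (Fin n → F4)) : Set (Fin n → F4) :=
  {u | ∀ v ∈ C, trIP u v = 0}

/-- The trace inner product on GF(4)^(2n), with GF(4)^(2n) identified with
GF(4)ⁿ × GF(4)ⁿ. -/
def trIP2 {n : ℕ} (u v : (Fin n → F4) × (Fin n → F4)) : F4 :=
  trIP u.1 v.1 + trIP u.2 v.2

/-- Hamming weight on GF(4)^(2n). -/
def wt2 {n : ℕ} (u : (Fin n → F4) × (Fin n → F4)) : ℕ := wt u.1 + wt u.2

/-- Trace dual of a code of length 2n. -/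
def trDual2 {n : ℕ} (C : Set ((Fin n → F4) × (Fin n → F4))) :
    Set ((Fin n → F4) × (Fin n → F4)) :=
  {u | ∀ v ∈ C, trIP2 u v = 0}

/-- The u|u+v code built from C₂⊥ and C₁. -/
def uuvCode {n : ℕ} (C₁ C₂ : AddSubgroup (Fin n → F4)) :
    Set ((Fin n → F4) × (Fin n → F4)) :=
  {p | ∃ u ∈ trDual (C₂ : Set (Fin n → F4)), ∃ v ∈ C₁, p = (u, u + v)}


-- basic F4 facts

lemma F4_two : (2 : F4) = 0 := by
  have := CharP.cast_eq_zero F4 2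
  exact_mod_cast this

lemma F4_card : Nat.card F4 = 4 := by
  have := GaloisField.card 2 2 (by norm_num)
  simpa using this

lemma F4_pow_four (x : F4) : x ^ 4 = x := by
  haveI : Fintype F4 := Fintype.ofFinite F4
  have h : Fintype.card F4 = 4 := by rw [← Nat.card_eq_fintype_card, F4_card]
  have := FiniteField.pow_card x
  rwa [h] at this

lemma F4_sq_eq_self {x : F4} (h : x ^ 2 = x) : x = 0 ∨ x = 1 := by
  have hx : x * (x - 1) = 0 := by linear_combination h
  rcases mul_eq_zero.mp hx with h0 | h1
  · exact Or.inl h0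
  · exact Or.inr (by linear_combination h1)

lemma F4_add_self (x : F4) : x + x = 0 := by linear_combination x * F4_two

lemma trIP_mem {n : ℕ} (u v : Fin n → F4) : trIP u v = 0 ∨ trIP u v = 1 := by
  apply F4_sq_eq_self
  unfold trIP
  rw [sum_pow_char]
  apply Finset.sum_congr rfl
  intro j _
  have ha := F4_pow_four (u j)
  have hb := F4_pow_four (v j)
  linear_combination (u j)^2 * hb + (v j)^2 * ha + ((u j)^3 * (v j)^3) * F4_two

abbrev K2 := ZMod 2

lemma K2_cases (c : K2) : c = 0 ∨ c = 1 := by revert c; decide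

local instance : DecidableEq F4 := Classical.decEq F4

local instance : Fintype F4 := Fintype.ofFinite F4

def toF2 : F4 → K2 := fun x => if x = 1 then 1 else 0

lemma toF2_eq_zero {x : F4} (hx : x = 0 ∨ x = 1) : toF2 x = 0 ↔ x = 0 := by
  rcases hx with rfl | rfl <;> simp [toF2]

lemma mem01_add {x y : F4} (hx : x = 0 ∨ x = 1) (hy : y = 0 ∨ y = 1) :
    x + y = 0 ∨ x + y = 1 := by
  rcases hx with rfl | rfl <;> rcases hy with rfl | rfl <;>
    simp [F4_add_self]

lemma toF2_add {x y : F4} (hx : x = 0 ∨ x = 1) (hy : y = 0 ∨ y = 1) :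
    toF2 (x + y) = toF2 x + toF2 y := by
  rcases hx with rfl | rfl <;> rcases hy with rfl | rfl
  · simp [toF2]
  · simp [toF2]
  · simp [toF2]
  · rw [F4_add_self]
    simp only [toF2, if_pos rfl, if_neg (zero_ne_one (α := F4))]
    decide

variable {n : ℕ}

lemma trIP_add_left (u u' v : Fin n → F4) :
    trIP (u + u') v = trIP u v + trIP u' v := by
  unfold trIP
  rw [← Finset.sum_add_distrib]
  apply Finset.sum_congr rfl
  intro j _
  have : (u + u') j = u j + u' j := rfl
  rw [this]
  linear_combination (u j * u' j * v j) * F4_two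

lemma trIP_comm (u v : Fin n → F4) : trIP u v = trIP v u := by
  unfold trIP
  apply Finset.sum_congr rfl
  intro j _
  ring

lemma trIP_add_right (u v v' : Fin n → F4) :
    trIP u (v + v') = trIP u v + trIP u v' := by
  rw [trIP_comm, trIP_add_left, trIP_comm v, trIP_comm v']

lemma trIP_zero_left (v : Fin n → F4) : trIP 0 v = 0 := by
  unfold trIP; simp

def Bf : LinearMap.BilinForm K2 (Fin n → F4) :=
  LinearMap.mk₂ K2 (fun u v => toF2 (trIP u v))
    (fun u u' v => by
      show toF2 (trIP (u + u') v) = toF2 (trIP u v) + toF2 (trIP u' v)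
      rw [trIP_add_left, toF2_add (trIP_mem u v) (trIP_mem u' v)])
    (fun c u v => by
      rcases K2_cases c with rfl | rfl
      · show toF2 (trIP ((0 : K2) • u) v) = (0 : K2) • toF2 (trIP u v)
        rw [zero_smul, zero_smul, trIP_zero_left]; simp [toF2]
      · rw [one_smul, one_smul])
    (fun u v v' => by
      show toF2 (trIP u (v + v')) = toF2 (trIP u v) + toF2 (trIP u v')
      rw [trIP_add_right, toF2_add (trIP_mem u v) (trIP_mem u v')])
    (fun c u v => by
      rcases K2_cases c with rfl | rfl
      · show toF2 (trIP u ((0 : K2) • v)) = (0 : K2) • toF2 (trIP u v)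
        rw [zero_smul, zero_smul, trIP_comm, trIP_zero_left]; simp [toF2]
      · rw [one_smul, one_smul])

lemma Bf_apply (u v : Fin n → F4) : Bf u v = toF2 (trIP u v) := rfl

lemma Bf_eq_zero_iff {u v : Fin n → F4} : Bf u v = 0 ↔ trIP u v = 0 := by
  rw [Bf_apply, toF2_eq_zero (trIP_mem u v)]

lemma Bf_symm : (Bf (n := n)).IsSymm := by
  refine ⟨fun u v => ?_⟩
  rw [Bf_apply, Bf_apply, trIP_comm]

lemma Bf_nondegenerate : (Bf (n := n)).Nondegenerate := by
  refine (LinearMap.IsRefl.nondegenerate_iff_separatingLeft Bf_symm.isRefl).mpr ?_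
  intro u h
  by_contra hu
  obtain ⟨j, hj⟩ := Function.ne_iff.mp hu
  simp only [Pi.zero_apply] at hj
  set a := u j with ha
  -- find c with a * c^2 + a^2 * c ≠ 0
  have hex : ∃ c : F4, a * c ^ 2 + a ^ 2 * c ≠ 0 := by
    by_contra hall
    push_neg at hall
    have h1 : a ^ 2 = a := by
      have := hall 1
      have h' : a + a ^ 2 = 0 := by linear_combination this
      linear_combination h' - (F4_add_self a)
    have ha1 : a = 1 := by
      rcases F4_sq_eq_self h1 with h0 | h1'
      · exact absurd h0 hj
      · exact h1'
    have hall' : ∀ c : F4, c = 0 ∨ c = 1 := by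
      intro c
      apply F4_sq_eq_self
      have := hall c
      rw [ha1] at this
      have hc : c ^ 2 + c = 0 := by linear_combination this
      linear_combination hc - F4_add_self c
    have hle : (Finset.univ : Finset F4).card ≤ ({0, 1} : Finset F4).card := by
      apply Finset.card_le_card
      intro x _
      rcases hall' x with rfl | rfl <;> simp
    have h4 : (Finset.univ : Finset F4).card = 4 := by
      rw [Finset.card_univ, ← Nat.card_eq_fintype_card, F4_card]
    have h2 : ({0, 1} : Finset F4).card ≤ 2 := Finset.card_insert_le _ _ |>.trans (by simp)
    omega
  obtain ⟨c, hc⟩ := hex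
  have hv := h (Pi.single j c)
  rw [Bf_eq_zero_iff] at hv
  apply hc
  rw [← hv]
  unfold trIP
  rw [Fintype.sum_eq_single j]
  · rw [Pi.single_eq_same]
  · intro i hi
    rw [Pi.single_eq_of_ne hi]
    ring

section prodform

variable {n : ℕ}

def B2 : LinearMap.BilinForm K2 ((Fin n → F4) × (Fin n → F4)) :=
  Bf.compl₁₂ (LinearMap.fst K2 _ _) (LinearMap.fst K2 _ _) +
  Bf.compl₁₂ (LinearMap.snd K2 _ _) (LinearMap.snd K2 _ _)

lemma B2_apply (p q : (Fin n → F4) × (Fin n → F4)) :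
    B2 p q = Bf p.1 q.1 + Bf p.2 q.2 := rfl

lemma B2_eq_zero_iff {p q : (Fin n → F4) × (Fin n → F4)} :
    B2 p q = 0 ↔ trIP2 p q = 0 := by
  rw [B2_apply, Bf_apply, Bf_apply, ← toF2_add (trIP_mem _ _) (trIP_mem _ _)]
  exact toF2_eq_zero (mem01_add (trIP_mem _ _) (trIP_mem _ _))

lemma trIP2_comm (p q : (Fin n → F4) × (Fin n → F4)) : trIP2 p q = trIP2 q p := by
  unfold trIP2; rw [trIP_comm p.1, trIP_comm p.2]

lemma B2_symm : (B2 (n := n)).IsSymm := by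
  refine ⟨fun p q => ?_⟩
  rw [B2_apply, B2_apply]
  rw [Bf_apply, Bf_apply, Bf_apply, Bf_apply, trIP_comm p.1, trIP_comm p.2]

lemma B2_nondegenerate : (B2 (n := n)).Nondegenerate := by
  refine (LinearMap.IsRefl.nondegenerate_iff_separatingLeft B2_symm.isRefl).mpr ?_
  intro p h
  have h1 : p.1 = 0 := by
    apply Bf_nondegenerate.1
    intro v
    have := h (v, 0)
    rw [B2_apply] at this
    simpa using this
  have h2 : p.2 = 0 := by
    apply Bf_nondegenerate.1
    intro v
    have := h (0, v)
    rw [B2_apply] at this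
    simpa using this
  exact Prod.ext h1 h2

def subMod (C : AddSubgroup (Fin n → F4)) : Submodule K2 (Fin n → F4) where
  carrier := C
  add_mem' := fun h h' => AddSubgroup.add_mem _ h h'
  zero_mem' := AddSubgroup.zero_mem _
  smul_mem' := fun c x hx => by
    rcases K2_cases c with rfl | rfl
    · rw [zero_smul]; exact AddSubgroup.zero_mem _
    · rw [one_smul]; exact hx

lemma mem_subMod {C : AddSubgroup (Fin n → F4)} {x : Fin n → F4} :
    x ∈ subMod C ↔ x ∈ C := Iff.rfl

lemma mem_orth_iff {C : AddSubgroup (Fin n → F4)} {u : Fin n → F4} :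
    u ∈ Bf.orthogonal (subMod C) ↔ u ∈ trDual (C : Set (Fin n → F4)) := by
  rw [LinearMap.BilinForm.mem_orthogonal_iff]
  constructor
  · intro h v hv
    have := h v hv
    rw [Bf_eq_zero_iff, trIP_comm] at this
    exact this
  · intro h v hv
    rw [Bf_eq_zero_iff, trIP_comm]
    exact h v hv

lemma nat_card_module (M : Type*) [AddCommGroup M] [Module K2 M] [Finite M] :
    Nat.card M = 2 ^ Module.finrank K2 M := by
  haveI : Fintype M := Fintype.ofFinite M
  rw [Nat.card_eq_fintype_card, Module.card_eq_pow_finrank (K := K2) (V := M), ZMod.card]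

lemma finrank_V : Module.finrank K2 (Fin n → F4) = 2 * n := by
  rw [Module.finrank_pi_fintype K2]
  have h : Module.finrank (ZMod 2) F4 = 2 := GaloisField.finrank 2 (by norm_num)
  simp [h, mul_comm]

end prodform

section wtlem

variable {n : ℕ}

lemma wt_triangle (a b : Fin n → F4) : wt (a + b) ≤ wt a + wt b := by
  unfold wt
  have hsub : {j | (a + b) j ≠ 0} ⊆ {j | a j ≠ 0} ∪ {j | b j ≠ 0} := by
    intro j hj
    by_contra hc
    simp only [Set.mem_union, Set.mem_setOf_eq, not_or, not_not] at hc
    apply hj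
    show a j + b j = 0
    rw [hc.1, hc.2, add_zero]
  calc Set.ncard {j | (a + b) j ≠ 0} ≤ Set.ncard ({j | a j ≠ 0} ∪ {j | b j ≠ 0}) :=
        Set.ncard_le_ncard hsub (Set.toFinite _)
    _ ≤ _ := Set.ncard_union_le _ _

lemma addV_self (u : Fin n → F4) : u + u = 0 := by
  funext j
  exact F4_add_self (u j)

lemma wt_key (u v : Fin n → F4) : wt v ≤ wt u + wt (u + v) := by
  have : u + (u + v) = v := by rw [← add_assoc, addV_self, zero_add]
  calc wt v = wt (u + (u + v)) := by rw [this]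
    _ ≤ _ := wt_triangle _ _

-- the linear involution (u, v) ↦ (u, u + v)
def eUV : ((Fin n → F4) × (Fin n → F4)) ≃ₗ[K2] ((Fin n → F4) × (Fin n → F4)) :=
  LinearEquiv.ofLinear
    ((LinearMap.fst K2 _ _).prod (LinearMap.fst K2 _ _ + LinearMap.snd K2 _ _))
    ((LinearMap.fst K2 _ _).prod (LinearMap.fst K2 _ _ + LinearMap.snd K2 _ _))
    (by
      apply LinearMap.ext
      intro p
      show (p.1, p.1 + (p.1 + p.2)) = p
      rw [← add_assoc, addV_self, zero_add])
    (by
      apply LinearMap.ext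
      intro p
      show (p.1, p.1 + (p.1 + p.2)) = p
      rw [← add_assoc, addV_self, zero_add])

lemma eUV_apply (p : (Fin n → F4) × (Fin n → F4)) : eUV p = (p.1, p.1 + p.2) := rfl

def prodSubEquiv (P Q : Submodule K2 (Fin n → F4)) : ↥(P.prod Q) ≃ ↥P × ↥Q where
  toFun z := (⟨z.1.1, z.2.1⟩, ⟨z.1.2, z.2.2⟩)
  invFun z := ⟨(z.1.1, z.2.1), ⟨z.1.2, z.2.2⟩⟩
  left_inv _ := rfl
  right_inv _ := rfl

lemma card_map_prod (P Q : Submodule K2 (Fin n → F4)) :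
    Nat.card ↥(Submodule.map (eUV (n := n)).toLinearMap (P.prod Q)) = Nat.card ↥P * Nat.card ↥Q := by
  rw [← Nat.card_prod]
  apply Nat.card_congr
  exact ((Submodule.equivMapOfInjective (eUV (n := n)).toLinearMap
    (eUV (n := n)).injective (P.prod Q)).symm.toEquiv.trans (prodSubEquiv P Q))

lemma pow_two_inj {a b : ℕ} (h : (2 : ℕ) ^ a = 2 ^ b) : a = b :=
  Nat.pow_right_injective (le_refl 2) h

end wtlem

section mainaux

variable {n : ℕ}

lemma mem_orth2_iff {S : Submodule K2 ((Fin n → F4) × (Fin n → F4))}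
    {p : (Fin n → F4) × (Fin n → F4)} :
    p ∈ B2.orthogonal S ↔ p ∈ trDual2 (S : Set _) := by
  rw [LinearMap.BilinForm.mem_orthogonal_iff]
  constructor
  · intro h q hq
    have := h q hq
    rw [B2_eq_zero_iff, trIP2_comm] at this
    exact this
  · intro h q hq
    rw [B2_eq_zero_iff, trIP2_comm]
    exact h q hq

end mainaux

/-- The u|u+v construction: from nested pure codes C₁ ⊆ C₂ one obtains a pure
[[2n, k₁-k₂, min {2d₁, δ}]] code. -/
theorem uuv_construction (n k₁ k₂ d₁ δ : ℕ) (hk₁ : k₁ ≤ n) (hk₂ : k₂ ≤ n)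
    (C₁ C₂ : AddSubgroup (Fin n → F4)) (h12 : C₁ ≤ C₂)
    (hso₁ : (C₁ : Set (Fin n → F4)) ⊆ trDual (C₁ : Set (Fin n → F4)))
    (hso₂ : (C₂ : Set (Fin n → F4)) ⊆ trDual (C₂ : Set (Fin n → F4)))
    (hc₁ : Nat.card C₁ = 2 ^ (n - k₁)) (hc₂ : Nat.card C₂ = 2 ^ (n - k₂))
    (hd₁ : ∀ v ∈ trDual (C₁ : Set (Fin n → F4)), v ≠ 0 → d₁ ≤ wt v)
    (hδ : ∀ v ∈ C₂, v ≠ 0 → δ ≤ wt v) :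
    (∀ p ∈ uuvCode C₁ C₂, ∀ q ∈ uuvCode C₁ C₂, p + q ∈ uuvCode C₁ C₂) ∧
    Set.ncard (uuvCode C₁ C₂) = 2 ^ (2 * n - k₁ + k₂) ∧
    uuvCode C₁ C₂ ⊆ trDual2 (uuvCode C₁ C₂) ∧
    trDual2 (uuvCode C₁ C₂) =
      {p | ∃ u ∈ trDual (C₁ : Set (Fin n → F4)), ∃ v ∈ C₂, p = (u, u + v)} ∧
    ∀ p ∈ trDual2 (uuvCode C₁ C₂), p ≠ 0 → min (2 * d₁) δ ≤ wt2 p := by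
  classical
  set W₁ := subMod C₁ with hW₁def
  set W₂ := subMod C₂ with hW₂def
  have hrV : Module.finrank K2 (Fin n → F4) = 2 * n := finrank_V
  have hrVV : Module.finrank K2 ((Fin n → F4) × (Fin n → F4)) = 2 * n + 2 * n := by
    rw [Module.finrank_prod, hrV]
  have cardW : ∀ (W : Submodule K2 (Fin n → F4)),
      Nat.card ↥W = 2 ^ Module.finrank K2 W := fun W => nat_card_module ↥W
  have cardW2 : ∀ (W : Submodule K2 ((Fin n → F4) × (Fin n → F4))),
      Nat.card ↥W = 2 ^ Module.finrank K2 W := fun W => nat_card_module ↥W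
  have hcard₁ : Nat.card ↥W₁ = 2 ^ (n - k₁) := by
    rw [← hc₁]
    exact Nat.card_congr (Equiv.subtypeEquivRight (fun x => Iff.rfl))
  have hcard₂ : Nat.card ↥W₂ = 2 ^ (n - k₂) := by
    rw [← hc₂]
    exact Nat.card_congr (Equiv.subtypeEquivRight (fun x => Iff.rfl))
  have hr₁ : Module.finrank K2 W₁ = n - k₁ := pow_two_inj (by rw [← cardW W₁, hcard₁])
  have hr₂ : Module.finrank K2 W₂ = n - k₂ := pow_two_inj (by rw [← cardW W₂, hcard₂])
  have hrO₁ : Module.finrank K2 (Bf.orthogonal W₁) = 2 * n - (n - k₁) := by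
    rw [LinearMap.BilinForm.finrank_orthogonal Bf_nondegenerate, hrV, hr₁]
  have hrO₂ : Module.finrank K2 (Bf.orthogonal W₂) = 2 * n - (n - k₂) := by
    rw [LinearMap.BilinForm.finrank_orthogonal Bf_nondegenerate, hrV, hr₂]
  set U := Submodule.map (eUV (n := n)).toLinearMap ((Bf.orthogonal W₂).prod W₁) with hUdef
  set U' := Submodule.map (eUV (n := n)).toLinearMap ((Bf.orthogonal W₁).prod W₂) with hU'def
  have hUset : (U : Set _) = uuvCode C₁ C₂ := by
    ext p
    simp only [hUdef, SetLike.mem_coe, Submodule.mem_map, Submodule.mem_prod, uuvCode,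
      Set.mem_setOf_eq]
    constructor
    · rintro ⟨⟨u, v⟩, ⟨hu, hv⟩, rfl⟩
      exact ⟨u, mem_orth_iff.mp hu, v, hv, rfl⟩
    · rintro ⟨u, hu, v, hv, rfl⟩
      exact ⟨(u, v), ⟨mem_orth_iff.mpr hu, hv⟩, rfl⟩
  have hU'set : (U' : Set _) =
      {p | ∃ u ∈ trDual (C₁ : Set (Fin n → F4)), ∃ v ∈ C₂, p = (u, u + v)} := by
    ext p
    simp only [hU'def, SetLike.mem_coe, Submodule.mem_map, Submodule.mem_prod,
      Set.mem_setOf_eq]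
    constructor
    · rintro ⟨⟨u, v⟩, ⟨hu, hv⟩, rfl⟩
      exact ⟨u, mem_orth_iff.mp hu, v, hv, rfl⟩
    · rintro ⟨u, hu, v, hv, rfl⟩
      exact ⟨(u, v), ⟨mem_orth_iff.mpr hu, hv⟩, rfl⟩
  have hcardU : Nat.card ↥U = 2 ^ ((2 * n - (n - k₂)) + (n - k₁)) := by
    rw [hUdef, card_map_prod, cardW (Bf.orthogonal W₂), cardW W₁, hrO₂, hr₁, ← pow_add]
  have hcardU' : Nat.card ↥U' = 2 ^ ((2 * n - (n - k₁)) + (n - k₂)) := by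
    rw [hU'def, card_map_prod, cardW (Bf.orthogonal W₁), cardW W₂, hrO₁, hr₂, ← pow_add]
  have hrU : Module.finrank K2 U = (2 * n - (n - k₂)) + (n - k₁) :=
    pow_two_inj (by rw [← cardW2 U, hcardU])
  have hrU' : Module.finrank K2 U' = (2 * n - (n - k₁)) + (n - k₂) :=
    pow_two_inj (by rw [← cardW2 U', hcardU'])
  have hrOU : Module.finrank K2 (B2.orthogonal U) = (2 * n + 2 * n) - ((2 * n - (n - k₂)) + (n - k₁)) := by
    rw [LinearMap.BilinForm.finrank_orthogonal B2_nondegenerate, hrVV, hrU]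
  -- key inclusion
  have hle : U' ≤ B2.orthogonal U := by
    intro p hp
    obtain ⟨⟨a, b⟩, hab, rfl⟩ := Submodule.mem_map.mp hp
    obtain ⟨ha, hb⟩ := Submodule.mem_prod.mp hab
    rw [LinearMap.BilinForm.mem_orthogonal_iff]
    intro q hq
    obtain ⟨⟨u, v⟩, huv, rfl⟩ := Submodule.mem_map.mp hq
    obtain ⟨hu, hv⟩ := Submodule.mem_prod.mp huv
    rw [B2_eq_zero_iff]
    show trIP u a + trIP (u + v) (a + b) = 0
    have h1 : trIP u b = 0 := (mem_orth_iff.mp hu) b hb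
    have h2 : trIP v a = 0 := by rw [trIP_comm]; exact (mem_orth_iff.mp ha) v hv
    have h3 : trIP v b = 0 := by rw [trIP_comm]; exact (hso₂ hb) v (h12 hv)
    rw [trIP_add_left, trIP_add_right, trIP_add_right, h1, h2, h3, add_zero, add_zero,
      add_zero]
    exact F4_add_self _
  have hkey : U' = B2.orthogonal U := by
    apply Submodule.eq_of_le_of_finrank_eq hle
    rw [hrU', hrOU]
    omega
  have hdualset : trDual2 (uuvCode C₁ C₂) = (B2.orthogonal U : Set _) := by
    ext p
    rw [← hUset]
    constructor
    · intro hp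
      exact mem_orth2_iff.mpr hp
    · intro hp
      exact mem_orth2_iff.mp hp
  have hdualD : trDual2 (uuvCode C₁ C₂) =
      {p | ∃ u ∈ trDual (C₁ : Set (Fin n → F4)), ∃ v ∈ C₂, p = (u, u + v)} := by
    rw [hdualset, ← hkey, hU'set]
  refine ⟨?_, ?_, ?_, hdualD, ?_⟩
  · -- closure under addition
    intro p hp q hq
    rw [← hUset] at hp hq ⊢
    exact U.add_mem hp hq
  · -- cardinality
    rw [← hUset]
    have h1 : Set.ncard (U : Set ((Fin n → F4) × (Fin n → F4))) = Nat.card ↥U := by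
      rw [← Nat.card_coe_set_eq]
      rfl
    rw [h1, hcardU]
    congr 1
    omega
  · -- self-orthogonality
    intro p hp
    rw [hdualset]
    have hW12 : W₁ ≤ W₂ := fun x hx => h12 hx
    have hUU' : U ≤ U' := Submodule.map_mono
      (Submodule.prod_mono (LinearMap.BilinForm.orthogonal_le hW12) hW12)
    rw [← hkey]
    rw [← hUset] at hp
    exact hUU' hp
  · -- minimum distance
    intro p hp hp0
    rw [hdualD] at hp
    obtain ⟨u, hu, v, hv, rfl⟩ := hp
    by_cases hv0 : v = 0
    · subst hv0
      have hu0 : u ≠ 0 := by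
        intro h
        apply hp0
        rw [h, add_zero]
        rfl
      have hd := hd₁ u hu hu0
      have hwt : wt2 (u, u + 0) = wt u + wt u := by
        rw [add_zero]; rfl
      rw [hwt]
      have := min_le_left (2 * d₁) δ
      omega
    · have h1 := hδ v hv hv0
      have h2 : wt v ≤ wt u + wt (u + v) := wt_key u v
      have hwt : wt2 (u, u + v) = wt u + wt (u + v) := rfl
      rw [hwt]
      have := min_le_right (2 * d₁) δ
      omega
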